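/- Let t_k = k + β with β > −1, or t_k = k^α with 1/2 < α < 1, and fix λ ∈ ℝ. Then F_{N,r,s}(λ) → 1 as N−|r| and N−|s| tend to infinity: for every ε > 0 there exists M₀ such that for all integers N, r, s with r < s, |r| < N, |s| < N, N−|r| ≥ M₀ and N−|s| ≥ M₀, one has |F_{N,r,s}(λ) − 1| ≤ ε. -/

import Mathlib

open Finset Filter

private lemma aux_weier (z : ℂ) (hz : ‖z‖ ≤ 1/3) :
    ‖((1 - z) * Complex.exp z)⁻¹ - 1‖ ≤ 6 * ‖z‖^2 := by
  have hz1 : ‖z‖ ≤ 1 := hz.trans (by norm_num)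
  have h1 : ‖(1 - z) * Complex.exp z - 1‖ ≤ 3 * ‖z‖^2 := by
    have heq : (1 - z) * Complex.exp z - 1
        = (Complex.exp z - 1 - z) - z * (Complex.exp z - 1) := by ring
    rw [heq]
    calc ‖(Complex.exp z - 1 - z) - z * (Complex.exp z - 1)‖
        ≤ ‖Complex.exp z - 1 - z‖ + ‖z * (Complex.exp z - 1)‖ := norm_sub_le _ _
      _ ≤ ‖z‖^2 + ‖z‖ * (2 * ‖z‖) := by
          gcongr
          · exact Complex.norm_exp_sub_one_sub_id_le hz1
          · rw [norm_mul]
            gcongr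
            exact Complex.norm_exp_sub_one_le hz1
      _ = 3 * ‖z‖^2 := by ring
  have hz2 : ‖z‖^2 ≤ (1/3)^2 := by
    have := norm_nonneg z
    nlinarith
  have h2 : (2:ℝ)/3 ≤ ‖(1 - z) * Complex.exp z‖ := by
    have h3 : ‖(1 - z) * Complex.exp z‖ - 1 ≥ -‖(1 - z) * Complex.exp z - 1‖ := by
      have := abs_le.1 (abs_norm_sub_norm_le ((1 - z) * Complex.exp z) 1) |>.1
      simpa using this
    nlinarith
  have hne : (1 - z) * Complex.exp z ≠ 0 := by
    intro h; rw [h, norm_zero] at h2; linarith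
  have key : ((1 - z) * Complex.exp z)⁻¹ - 1
      = ((1 - z) * Complex.exp z)⁻¹ * (1 - (1 - z) * Complex.exp z) := by
    rw [mul_sub, mul_one, inv_mul_cancel₀ hne]
  rw [key, norm_mul, norm_inv]
  have hn : ‖1 - (1 - z) * Complex.exp z‖ ≤ 3 * ‖z‖^2 := by
    rw [← norm_neg]; simpa [neg_sub] using h1
  calc ‖(1 - z) * Complex.exp z‖⁻¹ * ‖1 - (1 - z) * Complex.exp z‖
      ≤ (2/3 : ℝ)⁻¹ * (3 * ‖z‖^2) := by
        have hi : ‖(1 - z) * Complex.exp z‖⁻¹ ≤ (2/3 : ℝ)⁻¹ :=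
          inv_anti₀ (by norm_num) h2
        exact mul_le_mul hi hn (norm_nonneg _) (by positivity)
  _ ≤ 6 * ‖z‖^2 := by nlinarith [sq_nonneg ‖z‖]

private lemma aux_prod {ι : Type*} (s : Finset ι) (f : ι → ℂ) :
    ‖(∏ i ∈ s, f i) - 1‖ ≤ Real.exp (∑ i ∈ s, ‖f i - 1‖) - 1 := by
  induction s using Finset.cons_induction with
  | empty => simp
  | cons a s ha ih =>
    rw [Finset.prod_cons, Finset.sum_cons]
    set P := ∏ i ∈ s, f i
    set S := ∑ i ∈ s, ‖f i - 1‖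
    set δ := ‖f a - 1‖ with hδ
    have hδ0 : 0 ≤ δ := norm_nonneg _
    have hS0 : 0 ≤ S := Finset.sum_nonneg fun i _ => norm_nonneg _
    have e1 : 1 + δ ≤ Real.exp δ := by linarith [Real.add_one_le_exp δ]
    have hfa : ‖f a‖ ≤ 1 + δ := by
      have := norm_sub_norm_le (f a) 1
      rw [norm_one] at this; linarith
    have heq : f a * P - 1 = f a * (P - 1) + (f a - 1) := by ring
    calc ‖f a * P - 1‖ ≤ ‖f a‖ * ‖P - 1‖ + δ := by
          rw [heq]
          exact (norm_add_le _ _).trans (by rw [norm_mul])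
      _ ≤ Real.exp δ * (Real.exp S - 1) + (Real.exp δ - 1) := by
          have hP1 : (0:ℝ) ≤ ‖P - 1‖ := norm_nonneg _
          have h2 : ‖P - 1‖ ≤ Real.exp S - 1 := ih
          have h3 : 0 ≤ Real.exp S - 1 := by
            linarith [Real.add_one_le_exp S]
          nlinarith [norm_nonneg (f a)]
      _ = Real.exp (δ + S) - 1 := by rw [Real.exp_add]; ring

private lemma aux_exp_small {x y : ℝ} (hx0 : 0 ≤ x) (hxy : x ≤ y) (hy1 : y ≤ 1) :
    Real.exp x - 1 ≤ 3 * y := by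
  have h1 : Real.exp x ≤ Real.exp y := Real.exp_le_exp.2 hxy
  have h2 : (1 - y) * Real.exp y ≤ 1 := by
    have hle := Real.add_one_le_exp (-y)
    have h3 := Real.exp_pos y
    have h4 : Real.exp (-y) = (Real.exp y)⁻¹ := Real.exp_neg y
    rw [h4] at hle
    have h5 := mul_le_mul_of_nonneg_right hle (le_of_lt h3)
    rw [inv_mul_cancel₀ (ne_of_gt h3)] at h5
    nlinarith
  have h5 : Real.exp y ≤ Real.exp 1 := Real.exp_le_exp.2 hy1
  have h6 : Real.exp 1 < 2.7182818286 := Real.exp_one_lt_d9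
  have hy0 : 0 ≤ y := le_trans hx0 hxy
  nlinarith [Real.exp_pos y]

private lemma aux_Icc_map (a b : ℤ) : Finset.Icc a b =
    Finset.map ⟨fun n : ℕ => a + n, fun m n h => by simpa using h⟩
      (Finset.range (b + 1 - a).toNat) := by
  ext x
  simp only [Finset.mem_Icc, Finset.mem_map, Finset.mem_range, Function.Embedding.coeFn_mk]
  constructor
  · intro h; exact ⟨(x - a).toNat, by omega, by change a + ((x - a).toNat : ℤ) = x; omega⟩
  · rintro ⟨n, hn, rfl⟩; change a ≤ a + (n : ℤ) ∧ a + (n : ℤ) ≤ b; omega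

private lemma aux_setup (t : ℤ → ℝ)
    (ht : (∃ β : ℝ, -1 < β ∧ ∀ k : ℤ, 1 ≤ k → t k = (k : ℝ) + β) ∨
          (∃ α : ℝ, 1 / 2 < α ∧ α < 1 ∧ ∀ k : ℤ, 1 ≤ k → t k = (k : ℝ) ^ α))
    (l : ℝ) :
    (∀ k : ℤ, 1 ≤ k → 0 < t k) ∧
    Filter.Tendsto (fun n : ℕ => t ((n : ℤ) + 1)) Filter.atTop Filter.atTop ∧
    Summable (fun n : ℕ => l^2 / (t ((n : ℤ) + 1))^2) := by
  rcases ht with ⟨β, hβ, heq⟩ | ⟨α, hα1, hα2, heq⟩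
  · have hform : ∀ n : ℕ, t ((n : ℤ) + 1) = (n : ℝ) + 1 + β := by
      intro n
      rw [heq ((n : ℤ) + 1) (by omega)]
      push_cast; ring
    set c : ℝ := min 1 (1 + β) with hc
    have hc0 : 0 < c := lt_min one_pos (by linarith)
    have hc1 : c ≤ 1 := min_le_left _ _
    have hbound : ∀ n : ℕ, c * ((n : ℝ) + 1) ≤ (n : ℝ) + 1 + β := by
      intro n
      rcases le_or_gt 0 β with hb | hb
      · have : c ≤ 1 := hc1
        nlinarith [Nat.cast_nonneg (α := ℝ) n]
      · have hcb : c = 1 + β := min_eq_right (by linarith)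
        rw [hcb]
        nlinarith [Nat.cast_nonneg (α := ℝ) n]
    refine ⟨?_, ?_, ?_⟩
    · intro k hk
      rw [heq k hk]
      have : (1 : ℝ) ≤ (k : ℝ) := by exact_mod_cast hk
      linarith
    · have h1 : Filter.Tendsto (fun n : ℕ => (n : ℝ) + 1 + β) Filter.atTop Filter.atTop := by
        apply Filter.tendsto_atTop_add_const_right
        apply Filter.tendsto_atTop_add_const_right
        exact tendsto_natCast_atTop_atTop
      exact h1.congr fun n => (hform n).symm
    · have hbase : Summable (fun n : ℕ => 1 / ((n : ℝ) + 1)^2) := by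
        have h0 : Summable (fun n : ℕ => 1 / (n : ℝ)^2) :=
          Real.summable_one_div_nat_pow.mpr one_lt_two
        have h1 := (summable_nat_add_iff 1).mpr h0
        refine h1.congr fun n => ?_
        push_cast; ring
      refine Summable.of_nonneg_of_le (fun n => by positivity)
        (fun n => ?_) (hbase.mul_left (l^2 / c^2))
      rw [hform n]
      have hx : 0 < (n : ℝ) + 1 + β := lt_of_lt_of_le (by positivity) (hbound n)
      have hcn : 0 < c * ((n : ℝ) + 1) := by positivity
      calc l^2 / ((n : ℝ) + 1 + β)^2 ≤ l^2 / (c * ((n : ℝ) + 1))^2 := by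
            apply div_le_div_of_nonneg_left (sq_nonneg l) (by positivity)
            exact pow_le_pow_left₀ (le_of_lt hcn) (hbound n) 2
        _ = l^2 / c^2 * (1 / ((n : ℝ) + 1)^2) := by
            rw [mul_pow]; field_simp
  · have hα0 : 0 < α := by linarith
    have hform : ∀ n : ℕ, t ((n : ℤ) + 1) = ((n : ℝ) + 1) ^ α := by
      intro n
      rw [heq ((n : ℤ) + 1) (by omega)]
      push_cast; ring_nf
    refine ⟨?_, ?_, ?_⟩
    · intro k hk
      rw [heq k hk]
      apply Real.rpow_pos_of_pos
      exact_mod_cast lt_of_lt_of_le zero_lt_one hk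
    · have h1 : Filter.Tendsto (fun n : ℕ => ((n : ℝ) + 1) ^ α) Filter.atTop Filter.atTop := by
        apply (tendsto_rpow_atTop hα0).comp
        apply Filter.tendsto_atTop_add_const_right
        exact tendsto_natCast_atTop_atTop
      exact h1.congr fun n => (hform n).symm
    · have hbase : Summable (fun n : ℕ => ((n : ℝ) ^ (2 * α))⁻¹) :=
        Real.summable_nat_rpow_inv.mpr (by linarith)
      have h1 := (summable_nat_add_iff 1).mpr hbase
      refine (h1.mul_left (l^2)).congr fun n => ?_
      rw [hform n]
      have hx : (0 : ℝ) ≤ (n : ℝ) + 1 := by positivity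
      have h2 : (((n : ℝ) + 1) ^ α)^2 = ((n : ℝ) + 1) ^ (2 * α) := by
        rw [← Real.rpow_natCast (((n : ℝ) + 1) ^ α) 2, ← Real.rpow_mul hx]
        norm_num [mul_comm]
      rw [div_eq_mul_inv, h2]
      push_cast
      ring



/-- `F_{N,r,s}(λ)` from the paper: a product of inverted Weierstrass factors. -/
noncomputable def Fprod (t : ℤ → ℝ) (N r s : ℤ) (l : ℝ) : ℂ :=
  (∏ k ∈ Finset.Icc (N - s + 1) (N - r),
      ((1 - Complex.I * (l : ℂ) / (t k : ℂ)) * Complex.exp (Complex.I * (l : ℂ) / (t k : ℂ)))⁻¹) *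
  ∏ k ∈ Finset.Icc (N + r + 1) (N + s),
      ((1 + Complex.I * (l : ℂ) / (t k : ℂ)) *
        Complex.exp (-(Complex.I * (l : ℂ) / (t k : ℂ))))⁻¹


theorem Fprod_tendsto_one (t : ℤ → ℝ)
    (ht : (∃ β : ℝ, -1 < β ∧ ∀ k : ℤ, 1 ≤ k → t k = (k : ℝ) + β) ∨
          (∃ α : ℝ, 1 / 2 < α ∧ α < 1 ∧ ∀ k : ℤ, 1 ≤ k → t k = (k : ℝ) ^ α))
    (l : ℝ) (ε : ℝ) (hε : 0 < ε) :
    ∃ M₀ : ℤ, ∀ N r s : ℤ, r < s → |r| < N → |s| < N → M₀ ≤ N - |r| → M₀ ≤ N - |s| →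
      ‖Fprod t N r s l - 1‖ ≤ ε := by
  obtain ⟨hpos, htends, hsum⟩ := aux_setup t ht l
  set g : ℕ → ℝ := fun n => l^2 / (t ((n : ℤ) + 1))^2 with hgdef
  have hεm : 0 < min 1 (ε/3) := lt_min one_pos (by linarith)
  set ε' : ℝ := min 1 (ε/3) / 12 with hε'def
  have hε'pos : 0 < ε' := by positivity
  -- tail threshold for the sum
  have htail : ∀ᶠ (p : ℕ) in Filter.atTop, ∑' k, g (k + p) < ε' :=
    (tendsto_order.1 (tendsto_sum_nat_add g)).2 ε' hε'pos
  obtain ⟨m₁, hm₁⟩ := Filter.eventually_atTop.1 htail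
  -- threshold for t being large
  obtain ⟨m₂, hm₂⟩ := Filter.eventually_atTop.1 (htends.eventually_ge_atTop (3 * |l|))
  set M₀ : ℤ := max 2 (max ((m₁ : ℤ) + 2) ((m₂ : ℤ) + 2)) with hM₀def
  have hA : (2 : ℤ) ≤ M₀ := le_max_left _ _
  have hB : (m₁ : ℤ) + 2 ≤ M₀ := le_trans (le_max_left _ _) (le_max_right _ _)
  have hC : (m₂ : ℤ) + 2 ≤ M₀ := le_trans (le_max_right _ _) (le_max_right _ _)
  refine ⟨M₀, ?_⟩
  intro N r s hrs hrN hsN hNr hNs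
  -- facts about k ≥ M₀
  have hkfact : ∀ k : ℤ, M₀ ≤ k → 0 < t k ∧ 3 * |l| ≤ t k := by
    intro k hk
    have hk2 : (2:ℤ) ≤ k := le_trans hA hk
    have hkm : (m₂ : ℤ) + 2 ≤ k := le_trans hC hk
    have hpos' := hpos k (by omega)
    have hn2 : ((k - 1).toNat : ℤ) + 1 = k := by omega
    have hn1 : m₂ ≤ (k - 1).toNat := by omega
    refine ⟨hpos', ?_⟩
    have := hm₂ _ hn1
    rwa [hn2] at this
  -- sum bound over integer intervals
  have hsumb : ∀ a b : ℤ, M₀ ≤ a → ∑ k ∈ Finset.Icc a b, l^2 / (t k)^2 ≤ ε' := by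
    intro a b ha
    have ha' : (m₁ : ℤ) + 2 ≤ a := le_trans hB ha
    set p := (a - 1).toNat with hp
    have hpa : (p : ℤ) = a - 1 := by omega
    have hpm : m₁ ≤ p := by omega
    have hre : ∑ k ∈ Finset.Icc a b, l^2 / (t k)^2
        = ∑ n ∈ Finset.range ((b + 1 - a).toNat), g (n + p) := by
      rw [aux_Icc_map a b, Finset.sum_map]
      apply Finset.sum_congr rfl
      intro n _
      simp only [Function.Embedding.coeFn_mk, hgdef]
      change l^2 / (t (a + (n : ℤ)))^2 = _
      congr 2
      push_cast [hpa]
      ring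
    rw [hre]
    have hsum' : Summable fun n => g (n + p) := (summable_nat_add_iff p).2 hsum
    calc ∑ n ∈ Finset.range ((b + 1 - a).toNat), g (n + p) ≤ ∑' n, g (n + p) :=
        hsum'.sum_le_tsum _ (fun i _ => by positivity)
      _ ≤ ε' := le_of_lt (hm₁ p hpm)
  -- weierstrass factor bound for any k ≥ M₀, both signs
  have hfac : ∀ (σ : ℝ) (k : ℤ), M₀ ≤ k → |σ| = |l| →
      ‖((1 - Complex.I * (σ : ℂ) / (t k : ℂ)) *
          Complex.exp (Complex.I * (σ : ℂ) / (t k : ℂ)))⁻¹ - 1‖ ≤ 6 * (l^2 / (t k)^2) := by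
    intro σ k hk hσ
    obtain ⟨htk, hbig⟩ := hkfact k hk
    set z : ℂ := Complex.I * (σ : ℂ) / (t k : ℂ) with hz
    have hznorm : ‖z‖ = |l| / t k := by
      rw [hz, norm_div, norm_mul]
      simp [abs_of_pos htk, hσ]
    have hz3 : ‖z‖ ≤ 1/3 := by
      rw [hznorm, div_le_iff₀ htk]
      linarith [abs_nonneg l]
    have := aux_weier z hz3
    have hsq : ‖z‖^2 = l^2 / (t k)^2 := by
      rw [hznorm, div_pow, sq_abs]
    rwa [hsq] at this
  -- the two index ranges sit above M₀
  have habs_s : s ≤ |s| := le_abs_self s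
  have habs_r : -|r| ≤ r := neg_abs_le r
  have hI1 : ∀ k ∈ Finset.Icc (N - s + 1) (N - r), M₀ ≤ k := by
    intro k hk
    rw [Finset.mem_Icc] at hk
    linarith [hk.1]
  have hI2 : ∀ k ∈ Finset.Icc (N + r + 1) (N + s), M₀ ≤ k := by
    intro k hk
    rw [Finset.mem_Icc] at hk
    linarith [hk.1]
  -- bounds on the two sub-products
  set f1 : ℤ → ℂ := fun k =>
    ((1 - Complex.I * (l : ℂ) / (t k : ℂ)) * Complex.exp (Complex.I * (l : ℂ) / (t k : ℂ)))⁻¹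
    with hf1
  set f2 : ℤ → ℂ := fun k =>
    ((1 + Complex.I * (l : ℂ) / (t k : ℂ)) *
      Complex.exp (-(Complex.I * (l : ℂ) / (t k : ℂ))))⁻¹ with hf2
  have hf2eq : ∀ k : ℤ, f2 k =
      ((1 - Complex.I * ((-l : ℝ) : ℂ) / (t k : ℂ)) *
        Complex.exp (Complex.I * ((-l : ℝ) : ℂ) / (t k : ℂ)))⁻¹ := by
    intro k
    rw [hf2]
    push_cast
    ring_nf
  have hbound1 : ∀ k ∈ Finset.Icc (N - s + 1) (N - r), ‖f1 k - 1‖ ≤ 6 * (l^2 / (t k)^2) :=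
    fun k hk => hfac l k (hI1 k hk) rfl
  have hbound2 : ∀ k ∈ Finset.Icc (N + r + 1) (N + s), ‖f2 k - 1‖ ≤ 6 * (l^2 / (t k)^2) := by
    intro k hk
    rw [hf2eq k]
    exact hfac (-l) k (hI2 k hk) (abs_neg l)
  -- sums of the error terms
  have hS1 : ∑ k ∈ Finset.Icc (N - s + 1) (N - r), ‖f1 k - 1‖ ≤ 6 * ε' := by
    calc ∑ k ∈ Finset.Icc (N - s + 1) (N - r), ‖f1 k - 1‖
        ≤ ∑ k ∈ Finset.Icc (N - s + 1) (N - r), 6 * (l^2 / (t k)^2) :=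
          Finset.sum_le_sum hbound1
      _ = 6 * ∑ k ∈ Finset.Icc (N - s + 1) (N - r), l^2 / (t k)^2 := by
          rw [Finset.mul_sum]
      _ ≤ 6 * ε' := by
          have := hsumb (N - s + 1) (N - r) (by linarith)
          linarith
  have hS2 : ∑ k ∈ Finset.Icc (N + r + 1) (N + s), ‖f2 k - 1‖ ≤ 6 * ε' := by
    calc ∑ k ∈ Finset.Icc (N + r + 1) (N + s), ‖f2 k - 1‖
        ≤ ∑ k ∈ Finset.Icc (N + r + 1) (N + s), 6 * (l^2 / (t k)^2) :=
          Finset.sum_le_sum hbound2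
      _ = 6 * ∑ k ∈ Finset.Icc (N + r + 1) (N + s), l^2 / (t k)^2 := by
          rw [Finset.mul_sum]
      _ ≤ 6 * ε' := by
          have := hsumb (N + r + 1) (N + s) (by linarith)
          linarith
  -- product bounds
  have hprod1 : ‖(∏ k ∈ Finset.Icc (N - s + 1) (N - r), f1 k) - 1‖ ≤ Real.exp (6 * ε') - 1 := by
    refine le_trans (aux_prod _ _) ?_
    have := Real.exp_le_exp.2 hS1
    linarith
  have hprod2 : ‖(∏ k ∈ Finset.Icc (N + r + 1) (N + s), f2 k) - 1‖ ≤ Real.exp (6 * ε') - 1 := by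
    refine le_trans (aux_prod _ _) ?_
    have := Real.exp_le_exp.2 hS2
    linarith
  -- combine
  set A := ∏ k ∈ Finset.Icc (N - s + 1) (N - r), f1 k with hAdef
  set B := ∏ k ∈ Finset.Icc (N + r + 1) (N + s), f2 k with hBdef
  have hFprod : Fprod t N r s l = A * B := rfl
  have hnA : ‖A‖ ≤ Real.exp (6 * ε') := by
    have := norm_sub_norm_le A 1
    rw [norm_one] at this
    linarith [hprod1]
  have hcomb : ‖A * B - 1‖ ≤ Real.exp (12 * ε') - 1 := by
    have heq : A * B - 1 = A * (B - 1) + (A - 1) := by ring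
    calc ‖A * B - 1‖ ≤ ‖A‖ * ‖B - 1‖ + ‖A - 1‖ := by
          rw [heq]
          exact (norm_add_le _ _).trans (by rw [norm_mul])
      _ ≤ Real.exp (6 * ε') * (Real.exp (6 * ε') - 1) + (Real.exp (6 * ε') - 1) := by
          have hBnn : (0:ℝ) ≤ ‖B - 1‖ := norm_nonneg _
          have hexp_pos : (0:ℝ) < Real.exp (6 * ε') := Real.exp_pos _
          have h1 : (0:ℝ) ≤ Real.exp (6 * ε') - 1 := by
            have : (1:ℝ) ≤ Real.exp (6 * ε') := Real.one_le_exp (by positivity)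
            linarith
          nlinarith [norm_nonneg A]
      _ = Real.exp (12 * ε') - 1 := by
          rw [show (12:ℝ) * ε' = 6 * ε' + 6 * ε' by ring, Real.exp_add]
          ring
  rw [hFprod]
  refine le_trans hcomb ?_
  have h12 : 12 * ε' = min 1 (ε/3) := by rw [hε'def]; ring
  have := aux_exp_small (x := 12 * ε') (y := min 1 (ε/3))
    (by positivity) (le_of_eq h12) (min_le_left _ _)
  have hmin : min 1 (ε/3) ≤ ε/3 := min_le_right _ _
  linarith
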